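/- Let B(Ω) be a Bergman-type space with κ > 0, and let P f(z) := ∫_Ω ⟨K_w, K_z⟩ f(w) dσ(w) be the projection operator. Then P is bounded as an operator from L^p(Ω; dσ) into L^p(Ω; dσ) for all 1 < p < ∞. -/

import Mathlib

open MeasureTheory Filter Topology Set ENNReal

noncomputable section

/-- The ambient space `ℂⁿ`. -/
abbrev Cn (n : ℕ) := Fin n → ℂ

/-- A Bergman-type space on a domain `Ω ⊆ ℂⁿ`, following Mitkovski--Wick.
The data consists of the domain `Ω`, the involutions `φ_z` (axiom A.1), the
quasi-invariant metric `d` (axiom A.2), the finite measure `σ` together with the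
reproducing kernel `K` of the space of holomorphic functions in `L²(σ)` (axiom A.3),
the measure `λ = ‖K_z‖² dσ` (axiom A.4), the kernel quasi-identity (axiom A.5),
the Rudin--Forelli estimates with constant `κ` (axiom A.6), and the blow-up of
`‖K_z‖` at infinity (axiom A.7). -/
structure BergmanTypeSpace (n : ℕ) where
  Ω : Set (Cn n)
  isOpen_domain : IsOpen Ω
  isConnected_domain : IsConnected Ω
  zero_mem : (0 : Cn n) ∈ Ω
  /- A.1 : involutive holomorphic automorphisms with `φ z 0 = z`. -/
  φ : Cn n → Cn n → Cn n
  φ_mapsTo : ∀ z ∈ Ω, Set.MapsTo (φ z) Ω Ω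
  φ_holo : ∀ z ∈ Ω, DifferentiableOn ℂ (φ z) Ω
  φ_invol : ∀ z ∈ Ω, ∀ w ∈ Ω, φ z (φ z w) = w
  φ_zero : ∀ z ∈ Ω, φ z 0 = z
  /- A.2 : a quasi-invariant metric on `Ω`, separable and finitely compact. -/
  d : Cn n → Cn n → ℝ
  d_nonneg : ∀ z ∈ Ω, ∀ w ∈ Ω, 0 ≤ d z w
  d_eq_zero_iff : ∀ z ∈ Ω, ∀ w ∈ Ω, (d z w = 0 ↔ z = w)
  d_symm : ∀ z ∈ Ω, ∀ w ∈ Ω, d z w = d w z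
  d_triangle : ∀ u ∈ Ω, ∀ v ∈ Ω, ∀ w ∈ Ω, d u w ≤ d u v + d v w
  Cd : ℝ
  one_le_Cd : 1 ≤ Cd
  d_quasiInvariant : ∀ z ∈ Ω, ∀ u ∈ Ω, ∀ v ∈ Ω,
    d (φ z u) (φ z v) ≤ Cd * d u v ∧ d u v ≤ Cd * d (φ z u) (φ z v)
  d_separable : ∃ s : Set (Cn n), s.Countable ∧ s ⊆ Ω ∧
    ∀ z ∈ Ω, ∀ ε : ℝ, 0 < ε → ∃ w ∈ s, d z w < ε
  d_finitelyCompact : ∀ z ∈ Ω, ∀ r : ℝ, ∀ f : ℕ → Cn n,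
    (∀ m, f m ∈ Ω ∧ d z (f m) ≤ r) →
    ∃ w, (w ∈ Ω ∧ d z w ≤ r) ∧ ∃ g : ℕ → ℕ, StrictMono g ∧
      Filter.Tendsto (fun m => d w (f (g m))) Filter.atTop (nhds 0)
  /- A.3 : a finite measure carried by `Ω` for which the holomorphic functions in
  `L²(σ)` form a reproducing kernel Hilbert space with kernel `K`. -/
  σ : Measure (Cn n)
  σ_finite : IsFiniteMeasure σ
  σ_carried : σ Ωᶜ = 0
  K : Cn n → Cn n → ℂ
  K_holo : ∀ z ∈ Ω, DifferentiableOn ℂ (K z) Ω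
  K_memL2 : ∀ z ∈ Ω, MemLp (K z) 2 σ
  K_reproducing : ∀ f : Cn n → ℂ, DifferentiableOn ℂ f Ω → MemLp f 2 σ → ∀ z ∈ Ω,
    f z = ∫ w, f w * (starRingEnd ℂ) (K z w) ∂σ
  Knorm : Cn n → ℝ
  Knorm_def : ∀ z, Knorm z = Real.sqrt (∫ w, ‖K z w‖ ^ 2 ∂σ)
  Knorm_pos : ∀ z ∈ Ω, 0 < Knorm z
  Knorm_continuous : ∀ z ∈ Ω, ∀ ε : ℝ, 0 < ε → ∃ δ : ℝ, 0 < δ ∧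
    ∀ w ∈ Ω, d z w < δ → |Knorm w - Knorm z| < ε
  k : Cn n → Cn n → ℂ
  k_def : ∀ z w, k z w = K z w / (Knorm z : ℂ)
  /- A.4 : the measure `λ = ‖K_z‖² dσ` is quasi-invariant and doubling. -/
  lam : Measure (Cn n)
  lam_def : lam = σ.withDensity (fun z => ENNReal.ofReal (Knorm z ^ 2))
  Clam : ℝ≥0∞
  Clam_lt_top : Clam < ⊤
  lam_quasiInvariant : ∀ z ∈ Ω, ∀ E : Set (Cn n), MeasurableSet E → E ⊆ Ω →
    lam E ≤ Clam * lam (Ω ∩ φ z ⁻¹' E) ∧ lam (Ω ∩ φ z ⁻¹' E) ≤ Clam * lam E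
  Cdbl : ℝ≥0∞
  Cdbl_lt_top : Cdbl < ⊤
  lam_doubling : ∀ z ∈ Ω, ∀ r : ℝ, 0 < r →
    lam {w ∈ Ω | d z w < 2 * r} ≤ Cdbl * lam {w ∈ Ω | d z w < r}
  /- A.5 : `|⟨k_z, k_w⟩| ≃ 1 / ‖K_{φ_z(w)}‖`. -/
  C5 : ℝ
  one_le_C5 : 1 ≤ C5
  kernel_quasi : ∀ z ∈ Ω, ∀ w ∈ Ω,
    ‖∫ u, k z u * (starRingEnd ℂ) (k w u) ∂σ‖ ≤ C5 * (1 / Knorm (φ z w)) ∧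
    1 / Knorm (φ z w) ≤ C5 * ‖∫ u, k z u * (starRingEnd ℂ) (k w u) ∂σ‖
  /- A.6 : the Rudin--Forelli estimates, with constant `0 ≤ κ < 2`. -/
  κ : ℝ
  κ_nonneg : 0 ≤ κ
  κ_lt_two : κ < 2
  rudinForelli :
    (κ = 0 ∧ ∀ r : ℝ, 0 < r → ∃ C : ℝ≥0∞, C < ⊤ ∧ ∀ z ∈ Ω,
      (∫⁻ w, (‖∫ u, K z u * (starRingEnd ℂ) (K w u) ∂σ‖₊ : ℝ≥0∞) ^ r /
        ((ENNReal.ofReal (Knorm z)) ^ r * (ENNReal.ofReal (Knorm w)) ^ r) ∂lam) ≤ C) ∨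
    (0 < κ ∧ ∀ r s : ℝ, κ < r → 0 < s → s < κ → ∃ C : ℝ≥0∞, C < ⊤ ∧ ∀ z ∈ Ω,
      (∫⁻ w, (‖∫ u, K z u * (starRingEnd ℂ) (K w u) ∂σ‖₊ : ℝ≥0∞) ^ ((r + s) / 2) /
        ((ENNReal.ofReal (Knorm z)) ^ s * (ENNReal.ofReal (Knorm w)) ^ r) ∂lam) ≤ C)
  /- A.7 : `‖K_z‖ → ∞` as `d(z,0) → ∞`. -/
  Knorm_atInfty : ∀ M : ℝ, ∃ R : ℝ, ∀ z ∈ Ω, R < d z 0 → M < Knorm z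

namespace BergmanTypeSpace

variable {n : ℕ}

/-- Membership in the Bergman-type space `B(Ω)`: holomorphic on `Ω` and in `L²(σ)`. -/
def memB (S : BergmanTypeSpace n) (f : Cn n → ℂ) : Prop :=
  DifferentiableOn ℂ f S.Ω ∧ MemLp f 2 S.σ

/-- The `L²(Ω; dσ)` inner product. -/
def inn (S : BergmanTypeSpace n) (f g : Cn n → ℂ) : ℂ :=
  ∫ w, f w * (starRingEnd ℂ) (g w) ∂S.σ

/-- The `L²(Ω; dσ)` norm. -/
def nrm (S : BergmanTypeSpace n) (f : Cn n → ℂ) : ℝ :=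
  Real.sqrt (∫ w, ‖f w‖ ^ 2 ∂S.σ)

/-- The orthogonal projection `P f(z) = ∫ ⟨K_w, K_z⟩ f(w) dσ(w)`. -/
def P (S : BergmanTypeSpace n) (f : Cn n → ℂ) : Cn n → ℂ :=
  fun z => ∫ w, (S.inn (S.K w) (S.K z)) * f w ∂S.σ

/-- The Toeplitz operator `T_u = P M_u`. -/
def toeplitz (S : BergmanTypeSpace n) (u : Cn n → ℂ) (f : Cn n → ℂ) : Cn n → ℂ :=
  S.P (fun w => u w * f w)

/-- The Hankel operator `H_u = (I - P) M_u`. -/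
def hankel (S : BergmanTypeSpace n) (u : Cn n → ℂ) (f : Cn n → ℂ) : Cn n → ℂ :=
  fun w => u w * f w - S.P (fun x => u x * f x) w

/-- The adapted translation `U_z f(w) = f(φ_z(w)) k_z(w)`. -/
def U (S : BergmanTypeSpace n) (z : Cn n) (f : Cn n → ℂ) : Cn n → ℂ :=
  fun w => f (S.φ z w) * S.k z w

/-- The filter of points of `Ω` with `d(z,0) → ∞`. -/
def toInfty (S : BergmanTypeSpace n) : Filter (Cn n) :=
  (Filter.atTop.comap (fun z => S.d z 0)) ⊓ Filter.principal S.Ω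

/-- `Tad` is an adjoint of `T` as an operator on `B(Ω)`. -/
def IsAdjointPair (S : BergmanTypeSpace n) (T Tad : (Cn n → ℂ) → (Cn n → ℂ)) : Prop :=
  Set.MapsTo Tad {f | S.memB f} {f | S.memB f} ∧
  ∀ f g, S.memB f → S.memB g → S.inn (T f) g = S.inn f (Tad g)

/-- Compactness of an operator on `B(Ω)`: the image of any sequence in the unit ball
has a Cauchy (in `L²(σ)`) subsequence. -/
def IsCompactOp (S : BergmanTypeSpace n) (T : (Cn n → ℂ) → (Cn n → ℂ)) : Prop :=
  Set.MapsTo T {f | S.memB f} {f | S.memB f} ∧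
  ∀ f : ℕ → (Cn n → ℂ), (∀ m, S.memB (f m) ∧ S.nrm (f m) ≤ 1) →
    ∃ g : ℕ → ℕ, StrictMono g ∧ ∀ ε : ℝ, 0 < ε → ∃ N : ℕ, ∀ p ≥ N, ∀ q ≥ N,
      S.nrm (fun w => T (f (g p)) w - T (f (g q)) w) < ε

/-- The operator norm (of an operator defined on `B(Ω)`, with values in `L²(σ)`). -/
def opNorm (S : BergmanTypeSpace n) (T : (Cn n → ℂ) → (Cn n → ℂ)) : ℝ :=
  sInf {C : ℝ | 0 ≤ C ∧ ∀ f, S.memB f → S.nrm (T f) ≤ C * S.nrm f}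

/-- The essential norm `‖T‖ₑ = inf {‖T - A‖ : A compact}`. -/
def essNorm (S : BergmanTypeSpace n) (T : (Cn n → ℂ) → (Cn n → ℂ)) : ℝ :=
  sInf {c : ℝ | ∃ A, S.IsCompactOp A ∧ c = S.opNorm (fun f => fun w => T f w - A f w)}

/-- A strong Bergman-type space: equalities in axioms A.2, A.4 and A.5. -/
def IsStrong (S : BergmanTypeSpace n) : Prop :=
  (∀ z ∈ S.Ω, ∀ u ∈ S.Ω, ∀ v ∈ S.Ω, S.d (S.φ z u) (S.φ z v) = S.d u v) ∧
  (∀ z ∈ S.Ω, ∀ E : Set (Cn n), MeasurableSet E → E ⊆ S.Ω →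
    S.lam (S.Ω ∩ S.φ z ⁻¹' E) = S.lam E) ∧
  (∀ z ∈ S.Ω, ∀ w ∈ S.Ω, ‖S.inn (S.k z) (S.k w)‖ = 1 / S.Knorm (S.φ z w))

/-- A product `T_{u₁} T_{u₂} ⋯ T_{uₖ}` of Toeplitz operators. -/
def toeplitzProd (S : BergmanTypeSpace n) : List (Cn n → ℂ) → ((Cn n → ℂ) → (Cn n → ℂ))
  | [] => id
  | u :: us => fun f => S.toeplitz u (S.toeplitzProd us f)

/-- Symbols in `L∞(Ω)` (bounded measurable on `Ω`). -/
def IsBoundedSymbol (S : BergmanTypeSpace n) (u : Cn n → ℂ) : Prop :=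
  Measurable u ∧ ∃ M : ℝ, ∀ w ∈ S.Ω, ‖u w‖ ≤ M

/-- Symbols in `BUC(Ω,d)`: bounded and `d`-uniformly continuous on `Ω`. -/
def IsBUCSymbol (S : BergmanTypeSpace n) (u : Cn n → ℂ) : Prop :=
  S.IsBoundedSymbol u ∧
  ∀ ε : ℝ, 0 < ε → ∃ δ : ℝ, 0 < δ ∧ ∀ z ∈ S.Ω, ∀ w ∈ S.Ω, S.d z w < δ → ‖u z - u w‖ < ε

/-- A finite sum of finite products of Toeplitz operators whose symbols all satisfy `Q`. -/
def IsToeplitzPolynomial (S : BergmanTypeSpace n) (Q : (Cn n → ℂ) → Prop)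
    (A : (Cn n → ℂ) → (Cn n → ℂ)) : Prop :=
  ∃ (L : ℕ) (us : Fin L → List (Cn n → ℂ)),
    (∀ l, ∀ u ∈ us l, Q u) ∧ ∀ f x, A f x = ∑ l, S.toeplitzProd (us l) f x

/-- Membership in the norm closure of the finite sums of finite products of Toeplitz
operators with symbols satisfying `Q` (e.g. the Toeplitz algebra `𝒯_{L^∞}`). -/
def InToeplitzAlgebra (S : BergmanTypeSpace n) (Q : (Cn n → ℂ) → Prop)
    (T : (Cn n → ℂ) → (Cn n → ℂ)) : Prop :=
  Set.MapsTo T {f | S.memB f} {f | S.memB f} ∧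
  ∀ ε : ℝ, 0 < ε → ∃ A, S.IsToeplitzPolynomial Q A ∧
    ∀ f, S.memB f → S.nrm (fun x => T f x - A f x) ≤ ε * S.nrm f

end BergmanTypeSpace

/-!
On `Ω` the kernel of `P` is `⟨K_w, K_z⟩ = K(z, w)`, so `|P f(z)| ≤ ∫ |K(z, w)| |f(w)| dσ(w)` and
it suffices to bound the positive integral operator with the symmetric kernel `|K(z, w)|`.
Taking `r = 2 - a`, `s = a` in the Rudin–Forelli estimates (and `dλ = ‖K_w‖² dσ`) gives
`∫ |K(z, w)| ‖K_w‖^a dσ(w) ≲ ‖K_z‖^a` whenever `0 < a < min κ (2 - κ)`, which needs `κ > 0`.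
Hence `h(z) = ‖K_z‖^t`, with `t p` and `t q` in that range, is a test function for Schur's test
with conjugate exponents `p, q`, which yields boundedness on `L^p`.
-/

section SchurTest

variable {X : Type*} [MeasurableSpace X] {μ : Measure X} {p q : ℝ}

theorem rpow_lintegral_mul_le_of_weight (hpq : p.HolderConjugate q) {k g h : X → ℝ≥0∞}
    (hk : AEMeasurable k μ) (hg : AEMeasurable g μ) (hh : AEMeasurable h μ)
    (hh₀ : ∀ᵐ w ∂μ, h w ≠ 0 ∧ h w ≠ ⊤) :
    (∫⁻ w, k w * g w ∂μ) ^ p ≤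
      (∫⁻ w, k w * h w ^ q ∂μ) ^ (p / q) * ∫⁻ w, k w * g w ^ p * (h w ^ p)⁻¹ ∂μ := by
  have hp := hpq.pos
  have hq := hpq.symm.pos
  -- Hölder for the factorization `k g = (k^{1/p} g h⁻¹) (k^{1/q} h)`
  have hsplit : ∀ᵐ w ∂μ,
      k w * g w = (k w ^ (1 / p) * g w * (h w)⁻¹) * (k w ^ (1 / q) * h w) := by
    filter_upwards [hh₀] with w ⟨hw₀, hw⟩
    calc k w * g w = k w ^ (1 / p + 1 / q) * g w * ((h w)⁻¹ * h w) := by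
          rw [one_div, one_div, hpq.inv_add_inv_eq_one, ENNReal.rpow_one,
            ENNReal.inv_mul_cancel hw₀ hw, mul_one]
      _ = _ := by rw [ENNReal.rpow_add_of_nonneg _ _ (by positivity) (by positivity)]; ring
  have holder := ENNReal.lintegral_mul_le_Lp_mul_Lq μ hpq
    (((hk.pow_const (1 / p)).mul hg).mul hh.inv) ((hk.pow_const (1 / q)).mul hh)
  have hpow₁ : ∀ w, (k w ^ (1 / p) * g w * (h w)⁻¹) ^ p = k w * g w ^ p * (h w ^ p)⁻¹ := by
    intro w
    rw [ENNReal.mul_rpow_of_nonneg _ _ hp.le, ENNReal.mul_rpow_of_nonneg _ _ hp.le,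
      ← ENNReal.rpow_mul, one_div_mul_cancel hp.ne', ENNReal.rpow_one, ENNReal.inv_rpow]
  have hpow₂ : ∀ w, (k w ^ (1 / q) * h w) ^ q = k w * h w ^ q := by
    intro w
    rw [ENNReal.mul_rpow_of_nonneg _ _ hq.le, ← ENNReal.rpow_mul, one_div_mul_cancel hq.ne',
      ENNReal.rpow_one]
  simp only [Pi.mul_apply, Pi.inv_apply, hpow₁, hpow₂] at holder
  calc (∫⁻ w, k w * g w ∂μ) ^ p
      = (∫⁻ w, (k w ^ (1 / p) * g w * (h w)⁻¹) * (k w ^ (1 / q) * h w) ∂μ) ^ p := by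
        rw [lintegral_congr_ae hsplit]
    _ ≤ ((∫⁻ w, k w * g w ^ p * (h w ^ p)⁻¹ ∂μ) ^ (1 / p) *
          (∫⁻ w, k w * h w ^ q ∂μ) ^ (1 / q)) ^ p := by gcongr
    _ = _ := by
        rw [ENNReal.mul_rpow_of_nonneg _ _ hp.le, ← ENNReal.rpow_mul, ← ENNReal.rpow_mul,
          one_div_mul_cancel hp.ne', ENNReal.rpow_one, one_div_mul_eq_div, mul_comm]

theorem lintegral_mul_lintegral_mul_inv_le [SFinite μ] {T : X × X → ℝ≥0∞} (hT : Measurable T)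
    {v F : X → ℝ≥0∞} (hv : AEMeasurable v μ) (hF : AEMeasurable F μ)
    (hv₀ : ∀ᵐ w ∂μ, v w ≠ 0 ∧ v w ≠ ⊤) {C : ℝ≥0∞}
    (H : ∀ᵐ w ∂μ, ∫⁻ z, T (z, w) * v z ∂μ ≤ C * v w) :
    ∫⁻ z, ∫⁻ w, v z * (T (z, w) * (F w * (v w)⁻¹)) ∂μ ∂μ ≤ C * ∫⁻ w, F w ∂μ := by
  have hTv : AEMeasurable (Function.uncurry fun z w => v z * (T (z, w) * (F w * (v w)⁻¹)))
      (μ.prod μ) := hv.comp_fst.mul (hT.aemeasurable.mul (hF.mul hv.inv).comp_snd)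
  rw [lintegral_lintegral_swap hTv, ← lintegral_const_mul'' _ hF]
  refine lintegral_mono_ae ?_
  filter_upwards [H, hv₀] with w hw ⟨hw₀, hw⟩
  calc ∫⁻ z, v z * (T (z, w) * (F w * (v w)⁻¹)) ∂μ
      = F w * (v w)⁻¹ * ∫⁻ z, T (z, w) * v z ∂μ := by
        rw [← lintegral_const_mul'' (f := fun z => T (z, w) * v z) _
          ((hT.comp measurable_prodMk_right).aemeasurable.mul hv)]
        exact lintegral_congr fun z => by ring
    _ ≤ F w * (v w)⁻¹ * (C * v w) := by gcongr
    _ = C * F w := by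
        rw [mul_comm C, ← mul_assoc, mul_assoc (F w), ENNReal.inv_mul_cancel hw₀ hw, mul_one,
          mul_comm]

theorem lintegral_rpow_lintegral_le_of_schur [SFinite μ] (hpq : p.HolderConjugate q)
    {T : X × X → ℝ≥0∞} (hT : Measurable T) {h : X → ℝ≥0∞} (hh : AEMeasurable h μ)
    (hh₀ : ∀ᵐ w ∂μ, h w ≠ 0 ∧ h w ≠ ⊤) {C₁ C₂ : ℝ≥0∞} (hC₁ : C₁ ≠ ⊤)
    (H₁ : ∀ᵐ z ∂μ, ∫⁻ w, T (z, w) * h w ^ q ∂μ ≤ C₁ * h z ^ q)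
    (H₂ : ∀ᵐ w ∂μ, ∫⁻ z, T (z, w) * h z ^ p ∂μ ≤ C₂ * h w ^ p)
    {g : X → ℝ≥0∞} (hg : AEMeasurable g μ) :
    ∫⁻ z, (∫⁻ w, T (z, w) * g w ∂μ) ^ p ∂μ ≤ C₁ ^ (p / q) * C₂ * ∫⁻ w, g w ^ p ∂μ := by
  have hp := hpq.pos
  have hq := hpq.symm.pos
  have hhp₀ : ∀ᵐ w ∂μ, h w ^ p ≠ 0 ∧ h w ^ p ≠ ⊤ := hh₀.mono fun w ⟨hw₀, hw⟩ =>
    ⟨(ENNReal.rpow_pos (pos_iff_ne_zero.2 hw₀) hw).ne', ENNReal.rpow_ne_top_of_nonneg hp.le hw⟩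
  have pointwise : ∀ᵐ z ∂μ, (∫⁻ w, T (z, w) * g w ∂μ) ^ p ≤
      C₁ ^ (p / q) * ∫⁻ w, h z ^ p * (T (z, w) * (g w ^ p * (h w ^ p)⁻¹)) ∂μ := by
    filter_upwards [H₁] with z hz
    have hTz : Measurable fun w => T (z, w) := hT.comp measurable_prodMk_left
    calc (∫⁻ w, T (z, w) * g w ∂μ) ^ p
        ≤ (∫⁻ w, T (z, w) * h w ^ q ∂μ) ^ (p / q) *
            ∫⁻ w, T (z, w) * (g w ^ p * (h w ^ p)⁻¹) ∂μ := by
          simpa only [mul_assoc] using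
            rpow_lintegral_mul_le_of_weight hpq hTz.aemeasurable hg hh hh₀
      _ ≤ (C₁ * h z ^ q) ^ (p / q) * ∫⁻ w, T (z, w) * (g w ^ p * (h w ^ p)⁻¹) ∂μ := by gcongr
      _ = C₁ ^ (p / q) * ∫⁻ w, h z ^ p * (T (z, w) * (g w ^ p * (h w ^ p)⁻¹)) ∂μ := by
          rw [lintegral_const_mul'' (f := fun w => T (z, w) * (g w ^ p * (h w ^ p)⁻¹)) _
              (hTz.aemeasurable.mul ((hg.pow_const p).mul (hh.pow_const p).inv)),
            ENNReal.mul_rpow_of_nonneg _ _ (by positivity), ← ENNReal.rpow_mul,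
            mul_div_cancel₀ _ hq.ne', mul_assoc]
  calc ∫⁻ z, (∫⁻ w, T (z, w) * g w ∂μ) ^ p ∂μ
      ≤ ∫⁻ z, C₁ ^ (p / q) * ∫⁻ w, h z ^ p * (T (z, w) * (g w ^ p * (h w ^ p)⁻¹)) ∂μ ∂μ :=
        lintegral_mono_ae pointwise
    _ ≤ C₁ ^ (p / q) * (C₂ * ∫⁻ w, g w ^ p ∂μ) := by
        rw [lintegral_const_mul' _ _ (ENNReal.rpow_ne_top_of_nonneg (by positivity) hC₁)]
        gcongr
        exact lintegral_mul_lintegral_mul_inv_le hT (hh.pow_const p) (hg.pow_const p) hhp₀ H₂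
    _ = C₁ ^ (p / q) * C₂ * ∫⁻ w, g w ^ p ∂μ := (mul_assoc _ _ _).symm

theorem eLpNorm_le_of_schur [SFinite μ] (hpq : p.HolderConjugate q)
    {T : X × X → ℝ≥0∞} (hT : Measurable T) {h : X → ℝ≥0∞} (hh : AEMeasurable h μ)
    (hh₀ : ∀ᵐ w ∂μ, h w ≠ 0 ∧ h w ≠ ⊤) {C₁ C₂ : ℝ≥0∞} (hC₁ : C₁ ≠ ⊤)
    (H₁ : ∀ᵐ z ∂μ, ∫⁻ w, T (z, w) * h w ^ q ∂μ ≤ C₁ * h z ^ q)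
    (H₂ : ∀ᵐ w ∂μ, ∫⁻ z, T (z, w) * h z ^ p ∂μ ≤ C₂ * h w ^ p)
    {E F : Type*} [NormedAddCommGroup E] [NormedAddCommGroup F] {u : X → E} {f : X → F}
    (hf : AEStronglyMeasurable f μ) (hu : ∀ᵐ z ∂μ, ‖u z‖ₑ ≤ ∫⁻ w, T (z, w) * ‖f w‖ₑ ∂μ) :
    eLpNorm u (ENNReal.ofReal p) μ ≤
      C₁ ^ (1 / q) * C₂ ^ (1 / p) * eLpNorm f (ENNReal.ofReal p) μ := by
  have hp := hpq.pos
  have hp₀ : ENNReal.ofReal p ≠ 0 := by simpa using hp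
  rw [eLpNorm_eq_lintegral_rpow_enorm_toReal hp₀ ENNReal.ofReal_ne_top,
    eLpNorm_eq_lintegral_rpow_enorm_toReal hp₀ ENNReal.ofReal_ne_top, ENNReal.toReal_ofReal hp.le]
  calc (∫⁻ z, ‖u z‖ₑ ^ p ∂μ) ^ (1 / p)
      ≤ (∫⁻ z, (∫⁻ w, T (z, w) * ‖f w‖ₑ ∂μ) ^ p ∂μ) ^ (1 / p) := by
        gcongr ?_ ^ _
        exact lintegral_mono_ae (hu.mono fun z hz => by gcongr)
    _ ≤ (C₁ ^ (p / q) * C₂ * ∫⁻ w, ‖f w‖ₑ ^ p ∂μ) ^ (1 / p) := by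
        gcongr
        exact lintegral_rpow_lintegral_le_of_schur hpq hT hh hh₀ hC₁ H₁ H₂ hf.enorm
    _ = C₁ ^ (1 / q) * C₂ ^ (1 / p) * (∫⁻ w, ‖f w‖ₑ ^ p ∂μ) ^ (1 / p) := by
        rw [ENNReal.mul_rpow_of_nonneg _ _ (by positivity),
          ENNReal.mul_rpow_of_nonneg _ _ (by positivity), ← ENNReal.rpow_mul]
        congr 3
        field_simp

end SchurTest

namespace BergmanTypeSpace

variable {n : ℕ} (S : BergmanTypeSpace n)

instance : IsFiniteMeasure S.σ := S.σ_finite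

lemma ae_mem_domain : ∀ᵐ z ∂S.σ, z ∈ S.Ω := ae_iff.2 S.σ_carried

lemma inn_K_K {z w : Cn n} (hz : z ∈ S.Ω) (hw : w ∈ S.Ω) :
    S.inn (S.K z) (S.K w) = S.K z w :=
  (S.K_reproducing (S.K z) (S.K_holo z hz) (S.K_memL2 z hz) w hw).symm

lemma K_apply_comm {z w : Cn n} (hz : z ∈ S.Ω) (hw : w ∈ S.Ω) :
    S.K w z = starRingEnd ℂ (S.K z w) := by
  rw [← S.inn_K_K hw hz, ← S.inn_K_K hz hw, inn, inn, ← integral_conj]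
  congr 1 with u
  simp [mul_comm]

lemma K_apply_self {z : Cn n} (hz : z ∈ S.Ω) : S.K z z = ((S.Knorm z ^ 2 : ℝ) : ℂ) := by
  rw [← S.inn_K_K hz hz, inn, S.Knorm_def, Real.sq_sqrt (integral_nonneg fun _ => by positivity),
    ← integral_complex_ofReal]
  congr 1 with u
  rw [Complex.mul_conj']
  norm_cast

/-- The kernel `K(z, w)`, made jointly measurable by cutting it off outside `Ω × Ω`. -/
def kernel : Cn n × Cn n → ℂ := (S.Ω ×ˢ S.Ω).indicator fun x => S.K x.1 x.2

lemma kernel_of_mem {z w : Cn n} (hz : z ∈ S.Ω) (hw : w ∈ S.Ω) : S.kernel (z, w) = S.K z w :=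
  indicator_of_mem (mk_mem_prod hz hw) _

lemma kernel_of_not_mem {z w : Cn n} (h : ¬(z ∈ S.Ω ∧ w ∈ S.Ω)) : S.kernel (z, w) = 0 :=
  indicator_of_notMem (show (z, w) ∉ S.Ω ×ˢ S.Ω from h) _

lemma measurable_kernel : Measurable S.kernel := by
  have hΩ : MeasurableSet S.Ω := S.isOpen_domain.measurableSet
  have hK : Measurable fun x : S.Ω × S.Ω => S.K x.1 x.2 := by
    refine measurable_uncurry_of_continuous_of_measurable (u := fun z w : S.Ω => S.K z w)
      (fun w => ?_) (fun z => (S.K_holo z z.2).continuousOn.domRestrict.measurable)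
    have : (fun z : S.Ω => S.K z w) = fun z : S.Ω => starRingEnd ℂ (S.K w z) :=
      funext fun z => S.K_apply_comm w.2 z.2
    rw [this]
    exact Complex.continuous_conj.comp (S.K_holo w w.2).continuousOn.domRestrict
  refine measurable_of_restrict_of_restrict_compl (hΩ.prod hΩ) ?_ ?_
  · have : (S.Ω ×ˢ S.Ω).domRestrict S.kernel =
        (fun x : S.Ω × S.Ω => S.K x.1 x.2) ∘ MeasurableEquiv.Set.prod S.Ω S.Ω :=
      funext fun x => indicator_of_mem x.2 fun x : Cn n × Cn n => S.K x.1 x.2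
    rw [this]
    exact hK.comp (MeasurableEquiv.Set.prod _ _).measurable
  · have : (S.Ω ×ˢ S.Ω)ᶜ.domRestrict S.kernel = fun _ => 0 :=
      funext fun x => indicator_of_notMem x.2 fun x : Cn n × Cn n => S.K x.1 x.2
    rw [this]
    exact measurable_const

lemma enorm_kernel_comm (z w : Cn n) : ‖S.kernel (z, w)‖ₑ = ‖S.kernel (w, z)‖ₑ := by
  by_cases h : z ∈ S.Ω ∧ w ∈ S.Ω
  · rw [S.kernel_of_mem h.1 h.2, S.kernel_of_mem h.2 h.1, S.K_apply_comm h.1 h.2,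
      RCLike.enorm_conj]
  · rw [S.kernel_of_not_mem h, S.kernel_of_not_mem (by rwa [and_comm])]

lemma aemeasurable_Knorm : AEMeasurable S.Knorm S.σ := by
  refine ⟨fun z => √‖S.kernel (z, z)‖,
    (S.measurable_kernel.comp (measurable_id.prodMk measurable_id)).norm.sqrt, ?_⟩
  filter_upwards [S.ae_mem_domain] with z hz
  rw [S.kernel_of_mem hz hz, S.K_apply_self hz, Complex.norm_of_nonneg (by positivity),
    Real.sqrt_sq (S.Knorm_pos z hz).le]

lemma lintegral_lam (F : Cn n → ℝ≥0∞) :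
    ∫⁻ w, F w ∂S.lam = ∫⁻ w, ENNReal.ofReal (S.Knorm w ^ 2) * F w ∂S.σ := by
  rw [S.lam_def]
  exact lintegral_withDensity_eq_lintegral_mul_non_measurable₀ _
    (S.aemeasurable_Knorm.pow_const 2).ennreal_ofReal (.of_forall fun _ => ENNReal.ofReal_lt_top) F

lemma ofReal_Knorm_ne_zero {z : Cn n} (hz : z ∈ S.Ω) : ENNReal.ofReal (S.Knorm z) ≠ 0 := by
  simpa using S.Knorm_pos z hz

/-- The Rudin–Forelli estimate with `r = 2 - a`, `s = a`, for which `(r + s) / 2 = 1`. -/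
lemma lintegral_enorm_kernel_mul_Knorm_rpow_le {a : ℝ} (ha : 0 < a)
    (haκ : a < min S.κ (2 - S.κ)) : ∃ C : ℝ≥0∞, C ≠ ⊤ ∧ ∀ z ∈ S.Ω,
      ∫⁻ w, ‖S.kernel (z, w)‖ₑ * ENNReal.ofReal (S.Knorm w) ^ a ∂S.σ
        ≤ C * ENNReal.ofReal (S.Knorm z) ^ a := by
  rw [lt_min_iff] at haκ
  obtain ⟨C, hC, hRF⟩ := (S.rudinForelli.resolve_left fun h => by linarith [h.1]).2
    (2 - a) a (by linarith) ha haκ.1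
  refine ⟨C, hC.ne, fun z hz => ?_⟩
  set N : Cn n → ℝ≥0∞ := fun w => ENNReal.ofReal (S.Knorm w)
  have hNz : N z ^ a ≠ ⊤ := ENNReal.rpow_ne_top_of_nonneg ha.le ENNReal.ofReal_ne_top
  calc ∫⁻ w, ‖S.kernel (z, w)‖ₑ * N w ^ a ∂S.σ
      = ∫⁻ w, N z ^ a * (ENNReal.ofReal (S.Knorm w ^ 2) *
          ((‖∫ u, S.K z u * (starRingEnd ℂ) (S.K w u) ∂S.σ‖₊ : ℝ≥0∞) ^ ((2 - a + a) / 2) /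
            (N z ^ a * N w ^ (2 - a)))) ∂S.σ := by
        refine lintegral_congr_ae (S.ae_mem_domain.mono fun w hw => ?_)
        dsimp only
        have hNw : N w ≠ 0 := S.ofReal_Knorm_ne_zero hw
        have hsq : ENNReal.ofReal (S.Knorm w ^ 2) = N w ^ a * N w ^ (2 - a) := by
          rw [← ENNReal.rpow_add _ _ hNw ENNReal.ofReal_ne_top, add_sub_cancel, ENNReal.rpow_two,
            ENNReal.ofReal_pow (S.Knorm_pos w hw).le]
        have hD₀ : N z ^ a * N w ^ (2 - a) ≠ 0 := mul_ne_zero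
          (ENNReal.rpow_pos (pos_iff_ne_zero.2 (S.ofReal_Knorm_ne_zero hz))
            ENNReal.ofReal_ne_top).ne'
          (ENNReal.rpow_pos (pos_iff_ne_zero.2 hNw) ENNReal.ofReal_ne_top).ne'
        have hD : N z ^ a * N w ^ (2 - a) ≠ ⊤ := ENNReal.mul_ne_top hNz
          (ENNReal.rpow_ne_top_of_nonneg (by linarith) ENNReal.ofReal_ne_top)
        have hK : ∫ u, S.K z u * starRingEnd ℂ (S.K w u) ∂S.σ = S.K z w := S.inn_K_K hz hw
        rw [show (2 - a + a) / 2 = (1 : ℝ) by ring, ENNReal.rpow_one, hK, hsq,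
          S.kernel_of_mem hz hw, ← enorm_eq_nnnorm]
        calc ‖S.K z w‖ₑ * N w ^ a
            = N w ^ a * (N z ^ a * N w ^ (2 - a) * (‖S.K z w‖ₑ / (N z ^ a * N w ^ (2 - a)))) := by
              rw [ENNReal.mul_div_cancel hD₀ hD, mul_comm]
          _ = _ := by ring
    _ = N z ^ a * ∫⁻ w, _ ∂S.lam := by rw [S.lintegral_lam, lintegral_const_mul' _ _ hNz]
    _ ≤ C * N z ^ a := by rw [mul_comm]; gcongr; exact hRF z hz

lemma enorm_P_le (f : Cn n → ℂ) {z : Cn n} (hz : z ∈ S.Ω) :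
    ‖S.P f z‖ₑ ≤ ∫⁻ w, ‖S.kernel (z, w)‖ₑ * ‖f w‖ₑ ∂S.σ := by
  refine (enorm_integral_le_lintegral_enorm _).trans_eq (lintegral_congr_ae ?_)
  filter_upwards [S.ae_mem_domain] with w hw
  rw [enorm_mul, S.inn_K_K hw hz, S.kernel_of_mem hz hw, S.K_apply_comm hz hw, RCLike.enorm_conj]

end BergmanTypeSpace

/-- for `κ > 0` the projection `P` is bounded on `L^p(Ω; dσ)`
for all `1 < p < ∞`. -/
theorem statement2 (n : ℕ) (S : BergmanTypeSpace n) (hκ : 0 < S.κ) :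
    ∀ p : ℝ, 1 < p → ∃ C : ℝ≥0∞, C < ⊤ ∧ ∀ f : Cn n → ℂ, AEStronglyMeasurable f S.σ →
      eLpNorm (S.P f) (ENNReal.ofReal p) S.σ ≤ C * eLpNorm f (ENNReal.ofReal p) S.σ := by
  intro p hp
  set q := p.conjExponent
  have hpq : p.HolderConjugate q := .conjExponent hp
  have hp₀ := hpq.pos
  have hq₀ := hpq.symm.pos
  have hκ₂ : 0 < min S.κ (2 - S.κ) := lt_min hκ (by linarith [S.κ_lt_two])
  obtain ⟨t, ht, htm⟩ := exists_pos_mul_lt hκ₂ (p + q)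
  obtain ⟨C₁, hC₁, H₁⟩ := S.lintegral_enorm_kernel_mul_Knorm_rpow_le (a := t * q)
    (by positivity) (by nlinarith [mul_pos ht hp₀])
  obtain ⟨C₂, hC₂, H₂⟩ := S.lintegral_enorm_kernel_mul_Knorm_rpow_le (a := t * p)
    (by positivity) (by nlinarith [mul_pos ht hq₀])
  set h : Cn n → ℝ≥0∞ := fun z => ENNReal.ofReal (S.Knorm z) ^ t
  have hpow (z : Cn n) (b : ℝ) : h z ^ b = ENNReal.ofReal (S.Knorm z) ^ (t * b) :=
    (ENNReal.rpow_mul _ _ _).symm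
  refine ⟨C₁ ^ (1 / q) * C₂ ^ (1 / p), ?_, fun f hf => ?_⟩
  · exact ENNReal.mul_lt_top (ENNReal.rpow_lt_top_of_nonneg (by positivity) hC₁)
      (ENNReal.rpow_lt_top_of_nonneg (by positivity) hC₂)
  refine eLpNorm_le_of_schur hpq (T := fun x => ‖S.kernel x‖ₑ) S.measurable_kernel.enorm
    (h := h) (S.aemeasurable_Knorm.ennreal_ofReal.pow_const t) ?_ hC₁ ?_ ?_ hf ?_ <;>
  filter_upwards [S.ae_mem_domain] with z hz
  · exact ⟨(ENNReal.rpow_pos (pos_iff_ne_zero.2 (S.ofReal_Knorm_ne_zero hz))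
      ENNReal.ofReal_ne_top).ne', ENNReal.rpow_ne_top_of_nonneg ht.le ENNReal.ofReal_ne_top⟩
  · simpa only [hpow] using H₁ z hz
  · simpa only [hpow, S.enorm_kernel_comm _ z] using H₂ z hz
  · exact S.enorm_P_le f hz
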